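/- arXiv:2401.18078 — 4 statements merged into one kernel-verified Lean document; each statement's English description precedes it below -/
import Mathlib

section
/- The q-binomial theorem: in the polynomial ring ℤ[x,y,q], the identity ∏_{k=0}^{n-1} (x + q^k·y) = ∑_{k=0}^{n} q^(k(k-1)/2) · binom(n,k)_q · x^(n-k) · y^k holds for every natural number n. -/
/-!
The q-binomial theorem in `ℤ[x,y,q]`:
`∏_{k=0}^{n-1} (x + q^k y) = ∑_{k=0}^n q^(k(k-1)/2) binom(n,k)_q x^(n-k) y^k`.

The Gaussian binomial coefficient is characterized by its defining formula
`binom(n,k)_q = [n]!_q / ([n-k]!_q ⬝ [k]!_q)` in the fraction field `ℚ(q)` of `ℤ[q]`;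
we quantify over any family `B : ℕ → ℕ → ℤ[q]` satisfying this property.
-/

/-- The image of the variable `q` in the fraction field of `ℤ[q]`. -/
noncomputable def qq : FractionRing (Polynomial ℤ) :=
  algebraMap (Polynomial ℤ) (FractionRing (Polynomial ℤ)) Polynomial.X

/-- The q-bracket `[n]_q = 1 + q + ... + q^(n-1)`. -/
noncomputable def qBracket (n : ℕ) : FractionRing (Polynomial ℤ) :=
  ∑ i ∈ Finset.range n, qq ^ i

/-- The q-factorial `[n]!_q = [1]_q ⬝ [2]_q ⬝ ... ⬝ [n]_q`. -/
noncomputable def qFactorial (n : ℕ) : FractionRing (Polynomial ℤ) :=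
  ∏ i ∈ Finset.range n, qBracket (i + 1)

/-!
Both sides satisfy the same recursion in `n`: multiplying by `x + q^n y` turns the coefficients
`q^(k choose 2) binom(n,k)_q` into `q^(k choose 2) binom(n+1,k)_q` precisely because of the q-Pascal rule
`binom(n+1,k+1)_q = binom(n,k+1)_q + q^(n-k) binom(n,k)_q`. Hence the identity holds in every commutative
semiring for q-binomials defined by that rule. These agree with `B`: the same rule gives
`binom(n,k)_q [n-k]!_q [k]!_q = [n]!_q`, and the q-factorials are nonzero in `ℚ(q)` since at `q = 1`
they become `n!`.
-/

open Finset

section QBinomial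

variable {R S : Type*} [CommSemiring R] [CommSemiring S]

def qNum (q : R) (n : ℕ) : R := ∑ i ∈ range n, q ^ i

def qFact (q : R) (n : ℕ) : R := ∏ i ∈ range n, qNum q (i + 1)

/-- The `q ^ (n - k)` of the last clause is only ever truncated when `qBinom q n k = 0`. -/
def qBinom (q : R) : ℕ → ℕ → R
  | _, 0 => 1
  | 0, _ + 1 => 0
  | n + 1, k + 1 => qBinom q n (k + 1) + q ^ (n - k) * qBinom q n k

variable (q : R)

@[simp]
theorem qNum_zero : qNum q 0 = 0 := rfl

theorem qNum_add (a b : ℕ) : qNum q (a + b) = qNum q a + q ^ a * qNum q b := by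
  simp only [qNum, sum_range_add, pow_add, mul_sum]

@[simp]
theorem qFact_zero : qFact q 0 = 1 := rfl

theorem qFact_succ (n : ℕ) : qFact q (n + 1) = qFact q n * qNum q (n + 1) :=
  prod_range_succ _ _

@[simp]
theorem qFact_one (n : ℕ) : qFact (1 : R) n = n.factorial := by
  induction n with
  | zero => simp
  | succ n ih => simp [qFact_succ, ih, qNum, Nat.factorial_succ, mul_comm]

@[simp]
theorem qBinom_zero_right (n : ℕ) : qBinom q n 0 = 1 := by
  cases n <;> rfl

@[simp]
theorem qBinom_zero_succ (k : ℕ) : qBinom q 0 (k + 1) = 0 := rfl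

theorem qBinom_succ_succ (n k : ℕ) :
    qBinom q (n + 1) (k + 1) = qBinom q n (k + 1) + q ^ (n - k) * qBinom q n k := rfl

theorem qBinom_eq_zero_of_lt {n k : ℕ} (h : n < k) : qBinom q n k = 0 := by
  induction n generalizing k with
  | zero => obtain ⟨k, rfl⟩ := Nat.exists_eq_add_one_of_ne_zero h.ne'; rfl
  | succ n ih =>
    obtain ⟨k, rfl⟩ := Nat.exists_eq_add_one_of_ne_zero (Nat.ne_zero_of_lt h)
    rw [qBinom_succ_succ, ih (by omega), ih (by omega), mul_zero, add_zero]

theorem map_qNum {F : Type*} [FunLike F R S] [RingHomClass F R S] (f : F) (n : ℕ) :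
    f (qNum q n) = qNum (f q) n := by
  simp [qNum]

theorem map_qFact {F : Type*} [FunLike F R S] [RingHomClass F R S] (f : F) (n : ℕ) :
    f (qFact q n) = qFact (f q) n := by
  simp [qFact, map_qNum]

theorem map_qBinom {F : Type*} [FunLike F R S] [RingHomClass F R S] (f : F) (n k : ℕ) :
    f (qBinom q n k) = qBinom (f q) n k := by
  induction n generalizing k with
  | zero => cases k <;> simp
  | succ n ih => cases k <;> simp [qBinom_succ_succ, ih]

theorem qBinom_mul_qFact_mul_qFact {n k : ℕ} (hk : k ≤ n) :
    qBinom q n k * qFact q (n - k) * qFact q k = qFact q n := by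
  induction n generalizing k with
  | zero =>
    obtain rfl : k = 0 := by omega
    simp
  | succ n ih =>
    cases k with
    | zero => simp
    | succ k =>
      have upper : qBinom q n (k + 1) * qFact q (n - k) * qFact q (k + 1) =
          qFact q n * qNum q (n - k) := by
        rcases (Nat.lt_succ_iff.mp hk).lt_or_eq with hlt | rfl
        · obtain ⟨m, hm⟩ : ∃ m, n - k = m + 1 := ⟨n - (k + 1), by omega⟩
          rw [hm, qFact_succ, ← ih hlt, show n - (k + 1) = m by omega]
          ring
        · simp [qBinom_eq_zero_of_lt]
      have lower := ih (Nat.le_of_succ_le_succ hk)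
      have split : qNum q (n + 1) = qNum q (n - k) + q ^ (n - k) * qNum q (k + 1) := by
        rw [← qNum_add]; congr 1; omega
      calc qBinom q (n + 1) (k + 1) * qFact q (n + 1 - (k + 1)) * qFact q (k + 1)
          = qBinom q n (k + 1) * qFact q (n - k) * qFact q (k + 1) +
              q ^ (n - k) * (qBinom q n k * qFact q (n - k) * qFact q k) * qNum q (k + 1) := by
            rw [qBinom_succ_succ, Nat.add_sub_add_right, qFact_succ q k]; ring
        _ = qFact q (n + 1) := by rw [upper, lower, qFact_succ, split]; ring

theorem pow_choose_two_mul_qBinom_succ_succ (n k : ℕ) :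
    q ^ (k + 1).choose 2 * qBinom q (n + 1) (k + 1) =
      q ^ (k + 1).choose 2 * qBinom q n (k + 1) + q ^ n * (q ^ k.choose 2 * qBinom q n k) := by
  rw [qBinom_succ_succ, mul_add]
  rcases le_or_gt k n with hk | hk
  · obtain ⟨m, rfl⟩ := Nat.exists_eq_add_of_le hk
    rw [Nat.choose_succ_succ', Nat.choose_one_right, Nat.add_sub_cancel_left]
    ring
  · simp [qBinom_eq_zero_of_lt q hk]

theorem prod_add_pow_mul_eq_sum_qBinom (x y : R) (n : ℕ) :
    ∏ k ∈ range n, (x + q ^ k * y) =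
      ∑ k ∈ range (n + 1), q ^ k.choose 2 * qBinom q n k * x ^ (n - k) * y ^ k := by
  induction n with
  | zero => simp
  | succ n ih =>
    have times_x : (∑ k ∈ range (n + 1), q ^ k.choose 2 * qBinom q n k * x ^ (n - k) * y ^ k) * x =
        ∑ k ∈ range (n + 1), q ^ (k + 1).choose 2 * qBinom q n (k + 1) * x ^ (n - k) * y ^ (k + 1) +
          x ^ (n + 1) := by
      calc _ = ∑ k ∈ range (n + 2), q ^ k.choose 2 * qBinom q n k * x ^ (n + 1 - k) * y ^ k := by
            rw [sum_range_succ _ (n + 1), qBinom_eq_zero_of_lt q n.lt_succ_self, sum_mul]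
            simp only [mul_zero, zero_mul, add_zero]
            refine sum_congr rfl fun k hk => ?_
            rw [Nat.sub_add_comm (Nat.lt_succ_iff.mp (mem_range.mp hk)), pow_succ]
            ring
        _ = _ := by simp [sum_range_succ' _ (n + 1)]
    have times_qy : (∑ k ∈ range (n + 1), q ^ k.choose 2 * qBinom q n k * x ^ (n - k) * y ^ k) *
        (q ^ n * y) =
        ∑ k ∈ range (n + 1), q ^ n * (q ^ k.choose 2 * qBinom q n k) * x ^ (n - k) * y ^ (k + 1) := by
      rw [sum_mul]
      refine sum_congr rfl fun k _ => ?_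
      ring
    rw [prod_range_succ, ih, mul_add, times_x, times_qy, sum_range_succ' _ (n + 1)]
    simp only [pow_choose_two_mul_qBinom_succ_succ, Nat.add_sub_add_right, add_mul, sum_add_distrib]
    simp only [Nat.choose_zero_succ, pow_zero, qBinom_zero_right, mul_one, tsub_zero, one_mul]
    exact add_right_comm _ _ _

end QBinomial

theorem qFactorial_eq_algebraMap_qFact (n : ℕ) :
    qFactorial n = algebraMap (Polynomial ℤ) (FractionRing (Polynomial ℤ)) (qFact Polynomial.X n) := by
  rw [map_qFact]; rfl

theorem qFactorial_ne_zero (n : ℕ) : qFactorial n ≠ 0 := by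
  rw [qFactorial_eq_algebraMap_qFact, ne_eq,
    IsFractionRing.to_map_eq_zero_iff (K := FractionRing (Polynomial ℤ))]
  intro h
  have := congrArg (Polynomial.evalRingHom 1) h
  rw [map_qFact, Polynomial.coe_evalRingHom, Polynomial.eval_X, qFact_one, Polynomial.eval_zero] at this
  exact Nat.factorial_ne_zero n (by exact_mod_cast this)

theorem eq_qBinom_X_of_algebraMap_eq {p : Polynomial ℤ} {n k : ℕ} (hk : k ≤ n)
    (hp : algebraMap (Polynomial ℤ) (FractionRing (Polynomial ℤ)) p =
      qFactorial n / (qFactorial (n - k) * qFactorial k)) :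
    p = qBinom Polynomial.X n k := by
  apply IsFractionRing.injective (Polynomial ℤ) (FractionRing (Polynomial ℤ))
  rw [hp, div_eq_iff (mul_ne_zero (qFactorial_ne_zero _) (qFactorial_ne_zero _)),
    qFactorial_eq_algebraMap_qFact, qFactorial_eq_algebraMap_qFact, qFactorial_eq_algebraMap_qFact,
    ← map_mul, ← map_mul, ← mul_assoc, qBinom_mul_qFact_mul_qFact _ hk]

open MvPolynomial in
/-- The q-binomial theorem: in `ℤ[x,y,q]` (with `x = X 0`, `y = X 1`, `q = X 2`),
`∏_{k=0}^{n-1} (x + q^k y) = ∑_{k=0}^{n} q^(k(k-1)/2) ⬝ binom(n,k)_q ⬝ x^(n-k) ⬝ y^k`,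
where `B n k ∈ ℤ[q]` is the Gaussian binomial coefficient, characterized by
`B n k = [n]!_q / ([n-k]!_q [k]!_q)` in `ℚ(q)`. -/
theorem q_binomial_theorem (B : ℕ → ℕ → Polynomial ℤ)
    (hB : ∀ n k : ℕ, k ≤ n →
      algebraMap (Polynomial ℤ) (FractionRing (Polynomial ℤ)) (B n k) =
        qFactorial n / (qFactorial (n - k) * qFactorial k))
    (n : ℕ) :
    ∏ k ∈ Finset.range n, ((X 0 : MvPolynomial (Fin 3) ℤ) + X 2 ^ k * X 1) =
      ∑ k ∈ Finset.range (n + 1),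
        (X 2 : MvPolynomial (Fin 3) ℤ) ^ (k * (k - 1) / 2) *
          Polynomial.aeval (X 2 : MvPolynomial (Fin 3) ℤ) (B n k) *
          X 0 ^ (n - k) * X 1 ^ k := by
  rw [prod_add_pow_mul_eq_sum_qBinom]
  refine sum_congr rfl fun k hk => ?_
  have hkn : k ≤ n := Nat.lt_succ_iff.mp (mem_range.mp hk)
  rw [eq_qBinom_X_of_algebraMap_eq hkn (hB n k hkn),
    map_qBinom, Polynomial.aeval_X, Nat.choose_two_right]
end

section
/- For natural numbers n, k with 1 ≤ k < n, the trace of the k-th exterior power of the linear automorphism of ℂ^n given by the cyclic permutation (1,2,...,n) of the standard basis vectors is zero. -/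
open ExteriorAlgebra

/-- The endomorphism of the `k`-th exterior power `⋀[R]^k M` induced by an
endomorphism `f` of `M`. -/
noncomputable def extPowerMap {R : Type*} [CommRing R] {M : Type*} [AddCommGroup M]
    [Module R M] (k : ℕ) (f : M →ₗ[R] M) : ⋀[R]^k M →ₗ[R] ⋀[R]^k M :=
  LinearMap.restrict (ExteriorAlgebra.map f).toLinearMap (fun x hx => by
    have h2 : Submodule.map (ExteriorAlgebra.map f).toLinearMap
        (LinearMap.range (ι R (M := M))) ≤ LinearMap.range (ι R (M := M)) := by
      rintro y ⟨z, ⟨m, rfl⟩, rfl⟩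
      exact ⟨f m, (map_apply_ι f m).symm⟩
    have h3 : Submodule.map (ExteriorAlgebra.map f).toLinearMap (⋀[R]^k M) ≤ ⋀[R]^k M := by
      rw [exteriorPower, Submodule.map_pow]
      gcongr
    exact h3 (Submodule.mem_map_of_mem hx))

/-! For a primitive `n`-th root of unity `ζ` and `D = diag(1, ζ, …, ζ^(n-1))`, the cyclic
shift satisfies `D f D⁻¹ = ζ f`. Hence `⋀^k f` and `⋀^k (ζ f) = ζ^k ⋀^k f` are conjugate, so
`ζ^k tr (⋀^k f) = tr (⋀^k f)`, and `ζ^k ≠ 1` for `0 < k < n` forces the trace to vanish. -/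

section ExteriorPower

variable {R M : Type*} [CommRing R] [AddCommGroup M] [Module R M]

theorem extPowerMap_eq_map (k : ℕ) (f : M →ₗ[R] M) : extPowerMap k f = exteriorPower.map k f :=
  exteriorPower.linearMap_ext <| AlternatingMap.ext fun m => Subtype.ext <| by
    simp [extPowerMap, ExteriorAlgebra.map_apply_ιMulti, Function.comp_def]

theorem exteriorPower.map_smul (k : ℕ) (c : R) (f : M →ₗ[R] M) :
    exteriorPower.map k (c • f) = c ^ k • exteriorPower.map k f :=
  exteriorPower.linearMap_ext <| AlternatingMap.ext fun m => by
    simpa [Function.comp_def] using (exteriorPower.ιMulti R k).map_smul_univ (fun _ => c) (f ∘ m)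

theorem exteriorPower.trace_map_conj (k : ℕ) (e : M ≃ₗ[R] M) (f : M →ₗ[R] M) :
    LinearMap.trace R _ (exteriorPower.map k (e.conj f)) =
      LinearMap.trace R _ (exteriorPower.map k f) := by
  have hinv : exteriorPower.map k (e.symm : M →ₗ[R] M) * exteriorPower.map k (e : M →ₗ[R] M) =
      1 := by
    rw [Module.End.mul_eq_comp, ← exteriorPower.map_comp, LinearEquiv.symm_comp,
      exteriorPower.map_id]
    rfl
  rw [LinearEquiv.conj_apply, exteriorPower.map_comp, exteriorPower.map_comp,
    ← Module.End.mul_eq_comp, ← Module.End.mul_eq_comp, LinearMap.trace_mul_comm, ← mul_assoc,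
    hinv, one_mul]

end ExteriorPower

section CyclicShift

theorem pow_finRotate {G : Type*} [Monoid G] {n : ℕ} {u : G} (hu : u ^ n = 1) (j : Fin n) :
    u ^ (finRotate n j : ℕ) = u ^ ((j : ℕ) + 1) := by
  cases n with
  | zero => exact j.elim0
  | succ n =>
    rw [coe_finRotate]
    split_ifs with h
    · rw [h, Fin.val_last, pow_zero, hu]
    · rfl

variable {R : Type*} [CommSemiring R]

def diagonalPow (n : ℕ) (u : Rˣ) : (Fin n → R) ≃ₗ[R] (Fin n → R) :=
  LinearEquiv.piCongrRight fun j => LinearEquiv.smulOfUnit (u ^ (j : ℕ))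

theorem diagonalPow_single {n : ℕ} (u : Rˣ) (j : Fin n) (x : R) :
    diagonalPow n u (Pi.single j x) = (u : R) ^ (j : ℕ) • Pi.single j x := by
  ext i
  rcases eq_or_ne i j with rfl | h
  · simp [diagonalPow, LinearEquiv.smulOfUnit, Units.smul_def]
  · simp [diagonalPow, LinearEquiv.smulOfUnit, h]

theorem diagonalPow_symm_single {n : ℕ} (u : Rˣ) (j : Fin n) (x : R) :
    (diagonalPow n u).symm (Pi.single j x) = ((u⁻¹ : Rˣ) : R) ^ (j : ℕ) • Pi.single j x := by
  ext i
  rcases eq_or_ne i j with rfl | h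
  · simp [diagonalPow, LinearEquiv.smulOfUnit, Units.smul_def]
  · simp [diagonalPow, LinearEquiv.smulOfUnit, h]

theorem diagonalPow_conj_eq_smul {n : ℕ} {u : Rˣ} (hu : u ^ n = 1)
    {f : (Fin n → R) →ₗ[R] (Fin n → R)}
    (hf : ∀ j : Fin n, f (Pi.single j 1) = Pi.single (finRotate n j) 1) :
    (diagonalPow n u).conj f = (u : R) • f := by
  refine (Pi.basisFun R (Fin n)).ext fun j => ?_
  have hrot : (u : R) ^ (finRotate n j : ℕ) = (u : R) ^ (j : ℕ) * u := by
    rw [← Units.val_pow_eq_pow_val, pow_finRotate hu, pow_succ, Units.val_mul,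
      Units.val_pow_eq_pow_val]
  simp only [Pi.basisFun_apply, LinearEquiv.conj_apply, LinearMap.comp_apply, LinearEquiv.coe_coe,
    diagonalPow_symm_single, map_smul, hf, diagonalPow_single, hrot, LinearMap.smul_apply, smul_smul]
  rw [← mul_assoc, ← mul_pow, Units.inv_mul, one_pow, one_mul]

end CyclicShift

/-- For `1 ≤ k < n`, the trace of the `k`-th exterior power of the linear automorphism
of `ℂ^n` given by the cyclic permutation `(1,2,...,n)` of the standard basis vectors is
zero; i.e. the character of `Λ^k φ_n` vanishes on the cycle `(1,2,...,n)`. -/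
theorem trace_exteriorPower_cyclic (n k : ℕ) (hk1 : 1 ≤ k) (hkn : k < n)
    (f : (Fin n → ℂ) →ₗ[ℂ] (Fin n → ℂ))
    (hf : ∀ j : Fin n, f (Pi.single j 1) = Pi.single (finRotate n j) 1) :
    LinearMap.trace ℂ (⋀[ℂ]^k (Fin n → ℂ)) (extPowerMap k f) = 0 := by
  have hn : n ≠ 0 := by omega
  have hζ : IsPrimitiveRoot (Complex.exp (2 * Real.pi * Complex.I / n)) n :=
    Complex.isPrimitiveRoot_exp n hn
  set u := (hζ.isUnit hn).unit
  have hu : u ^ n = 1 := Units.ext (by simpa [u] using hζ.pow_eq_one)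
  set T := LinearMap.trace ℂ (⋀[ℂ]^k (Fin n → ℂ)) (exteriorPower.map k f)
  have hT : (u : ℂ) ^ k * T = T := calc
    (u : ℂ) ^ k * T = LinearMap.trace ℂ _ (exteriorPower.map k ((u : ℂ) • f)) := by
      rw [exteriorPower.map_smul, map_smul, smul_eq_mul]
    _ = LinearMap.trace ℂ _ (exteriorPower.map k ((diagonalPow n u).conj f)) := by
      rw [diagonalPow_conj_eq_smul hu hf]
    _ = T := exteriorPower.trace_map_conj k _ f
  rw [extPowerMap_eq_map]
  by_contra hT0
  exact hζ.pow_ne_one_of_pos_of_lt (by omega) hkn ((mul_eq_right₀ hT0).1 hT)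
end

section
/- If f : V → V is a diagonalizable endomorphism of an n-dimensional vector space over a field k with eigenvalues x_1, ..., x_n (with multiplicity), then for each natural number k the induced endomorphism Λ^k(f) on the k-th exterior power is diagonalizable and tr(Λ^k(f)) = ∑_{1 ≤ i_1 < i_2 < ... < i_k ≤ n} x_{i_1}·x_{i_2}·...·x_{i_k}, i.e. the k-th elementary symmetric polynomial in the eigenvalues. -/
open ExteriorAlgebra

section aux
variable {K : Type*} [Field K] {V : Type*} [AddCommGroup V] [Module K V] {n : ℕ}

noncomputable def wB (b : Module.Basis (Fin n) K V) (k : ℕ)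
    (s : {s : Finset (Fin n) // s.card = k}) : ⋀[K]^k V :=
  ⟨ιMulti K k (fun i => b ((s.1.orderIsoOfFin s.2 i : Fin n))),
    ιMulti_range K k (Set.mem_range_self _)⟩

noncomputable def phiB (b : Module.Basis (Fin n) K V) (k : ℕ)
    (s : {s : Finset (Fin n) // s.card = k}) : V [⋀^Fin k]→ₗ[K] K :=
  ((Pi.basisFun K (Fin k)).det).compLinearMap
    (LinearMap.pi (fun i => b.coord ((s.1.orderIsoOfFin s.2 i : Fin n))))

lemma phiB_apply_wB (b : Module.Basis (Fin n) K V) (k : ℕ)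
    (s t : {s : Finset (Fin n) // s.card = k}) :
    phiB b k s (fun i => b ((t.1.orderIsoOfFin t.2 i : Fin n))) = if s = t then 1 else 0 := by
  rw [phiB, AlternatingMap.compLinearMap_apply, Module.Basis.det_apply]
  have hM : ∀ i j, (Pi.basisFun K (Fin k)).toMatrix
      (fun j => LinearMap.pi (fun i => b.coord ((s.1.orderIsoOfFin s.2 i : Fin n)))
        (b ((t.1.orderIsoOfFin t.2 j : Fin n)))) i j
      = if (s.1.orderIsoOfFin s.2 i : Fin n) = (t.1.orderIsoOfFin t.2 j : Fin n) then 1 else 0 := by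
    intro i j
    simp [Module.Basis.toMatrix_apply, LinearMap.pi_apply, Module.Basis.coord_apply, Module.Basis.repr_self,
      Finsupp.single_apply, eq_comm]
    split_ifs <;> simp_all
  split_ifs with h
  · subst h
    rw [show (Pi.basisFun K (Fin k)).toMatrix _ = (1 : Matrix (Fin k) (Fin k) K) from ?_]
    · exact Matrix.det_one
    · ext i j
      rw [hM i j]
      simp [Matrix.one_apply, EmbeddingLike.apply_eq_iff_eq, Subtype.ext_iff, eq_comm]
  · obtain ⟨a, hat, has⟩ : ∃ a, a ∈ t.1 ∧ a ∉ s.1 := by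
      by_contra hc
      push_neg at hc
      exact h (Subtype.ext (Finset.eq_of_subset_of_card_le hc (by rw [s.2, t.2])).symm)
    obtain ⟨j0, hj0⟩ := (t.1.orderIsoOfFin t.2).surjective ⟨a, hat⟩
    apply Matrix.det_eq_zero_of_column_eq_zero j0
    intro i
    rw [hM i j0, if_neg]
    intro hEq
    apply has
    rw [hj0] at hEq
    rw [show a = ((s.1.orderIsoOfFin s.2) i : Fin n) from hEq.symm]
    exact ((s.1.orderIsoOfFin s.2) i).2

noncomputable def PhiB (b : Module.Basis (Fin n) K V) (k : ℕ)
    (s : {s : Finset (Fin n) // s.card = k}) : ⋀[K]^k V →ₗ[K] K :=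
  (liftAlternating (Pi.single k (phiB b k s))) ∘ₗ (⋀[K]^k V).subtype

lemma PhiB_apply_wB (b : Module.Basis (Fin n) K V) (k : ℕ)
    (s t : {s : Finset (Fin n) // s.card = k}) :
    PhiB b k s (wB b k t) = if s = t then 1 else 0 := by
  rw [PhiB, LinearMap.comp_apply]
  show liftAlternating (Pi.single k (phiB b k s)) (ιMulti K k _) = _
  rw [liftAlternating_apply_ιMulti, Pi.single_eq_same, phiB_apply_wB]

lemma wB_li (b : Module.Basis (Fin n) K V) (k : ℕ) : LinearIndependent K (wB b k) := by
  rw [Fintype.linearIndependent_iff]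
  intro g hg s
  have h := congrArg (PhiB b k s) hg
  rw [map_sum, map_zero] at h
  simp only [map_smul, PhiB_apply_wB, smul_eq_mul, mul_ite, mul_one, mul_zero] at h
  rwa [Finset.sum_ite_eq (Finset.univ) s g, if_pos (Finset.mem_univ s)] at h

lemma ιMulti_mem_span (b : Module.Basis (Fin n) K V) (k : ℕ) (v : Fin k → V) :
    ιMulti K k v ∈ Submodule.span K (Set.range (fun s : {s : Finset (Fin n) // s.card = k} =>
      ιMulti K k (fun i => b ((s.1.orderIsoOfFin s.2 i : Fin n))))) := by
  have hv : v = fun j => ∑ i, b.repr (v j) i • b i := funext fun j => (b.sum_repr (v j)).symm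
  rw [hv]
  rw [show ιMulti K k (fun j => ∑ i, b.repr (v j) i • b i)
      = (ιMulti K k).toMultilinearMap (fun j => ∑ i, b.repr (v j) i • b i) from rfl]
  rw [MultilinearMap.map_sum]
  apply Submodule.sum_mem
  intro r _
  rw [MultilinearMap.map_smul_univ]
  apply Submodule.smul_mem
  by_cases hr : Function.Injective r
  · set s : Finset (Fin n) := Finset.univ.image r with hs
    have hcard : s.card = k := by
      rw [hs, Finset.card_image_of_injective _ hr, Finset.card_univ, Fintype.card_fin]
    have hbij : Function.Bijective (fun j => (⟨r j, by simp [hs]⟩ : {x // x ∈ s})) := by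
      rw [Fintype.bijective_iff_injective_and_card]
      refine ⟨fun a b' hab => hr (congrArg Subtype.val hab), ?_⟩
      simp [Fintype.card_coe, hcard]
    let e : Fin k ≃ {x // x ∈ s} := Equiv.ofBijective _ hbij
    let τ : Equiv.Perm (Fin k) := e.trans (s.orderIsoOfFin hcard).toEquiv.symm
    have hcomp : (fun j => b (r j)) = (fun i => b ((s.orderIsoOfFin hcard i : Fin n))) ∘ τ := by
      funext j
      have : (s.orderIsoOfFin hcard) (τ j) = ⟨r j, by simp [hs]⟩ := by
        simp [τ, e]
      simp [Function.comp, this]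
    rw [show ((ιMulti K k).toMultilinearMap (fun j => b (r j)) : ExteriorAlgebra K V)
        = ιMulti K k ((fun i => b ((s.orderIsoOfFin hcard i : Fin n))) ∘ τ) from by
          rw [← hcomp]; rfl]
    rw [AlternatingMap.map_perm]
    exact Submodule.smul_of_tower_mem _ _ (Submodule.subset_span ⟨⟨s, hcard⟩, rfl⟩)
  · obtain ⟨i, j, hrij, hij⟩ := Function.not_injective_iff.mp hr
    rw [show (ιMulti K k).toMultilinearMap (fun j => b (r j))
        = ιMulti K k (fun j => b (r j)) from rfl]
    rw [AlternatingMap.map_eq_zero_of_eq _ _ (by rw [hrij]) hij]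
    exact Submodule.zero_mem _

lemma wB_span (b : Module.Basis (Fin n) K V) (k : ℕ) :
    ⊤ ≤ Submodule.span K (Set.range (wB b k)) := by
  intro y _
  have h1 : Submodule.map (⋀[K]^k V).subtype (Submodule.span K (Set.range (wB b k)))
      = Submodule.span K (Set.range (fun s : {s : Finset (Fin n) // s.card = k} =>
        ιMulti K k (fun i => b ((s.1.orderIsoOfFin s.2 i : Fin n))))) := by
    rw [Submodule.map_span, ← Set.range_comp]
    rfl
  have h2 : (y : ExteriorAlgebra K V) ∈
      Submodule.map (⋀[K]^k V).subtype (Submodule.span K (Set.range (wB b k))) := by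
    rw [h1]
    have hle : (⋀[K]^k V : Submodule K (ExteriorAlgebra K V)) ≤
        Submodule.span K (Set.range (fun s : {s : Finset (Fin n) // s.card = k} =>
          ιMulti K k (fun i => b ((s.1.orderIsoOfFin s.2 i : Fin n))))) := by
      rw [← ιMulti_span_fixedDegree]
      refine Submodule.span_le.mpr ?_
      rintro _ ⟨v, rfl⟩
      exact ιMulti_mem_span b k v
    exact hle y.2
  obtain ⟨z, hz, hzy⟩ := h2
  rwa [show z = y from Subtype.ext hzy] at hz

noncomputable def cB (b : Module.Basis (Fin n) K V) (k : ℕ) :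
    Module.Basis {s : Finset (Fin n) // s.card = k} K (⋀[K]^k V) :=
  Module.Basis.mk (wB_li b k) (wB_span b k)

lemma extPowerMap_wB (b : Module.Basis (Fin n) K V) (k : ℕ) (f : V →ₗ[K] V) (x : Fin n → K)
    (hb : ∀ i, f (b i) = x i • b i) (s : {s : Finset (Fin n) // s.card = k}) :
    extPowerMap k f (wB b k s) = (∏ i ∈ s.1, x i) • wB b k s := by
  apply Subtype.ext
  rw [extPowerMap, LinearMap.restrict_coe_apply]
  show map f (ιMulti K k _) = _
  rw [map_apply_ιMulti]
  have h1 : (⇑f ∘ fun i => b ((s.1.orderIsoOfFin s.2 i : Fin n)))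
      = fun i => x ((s.1.orderIsoOfFin s.2 i : Fin n)) • b ((s.1.orderIsoOfFin s.2 i : Fin n)) :=
    funext fun i => hb _
  rw [h1]
  have h2 : ιMulti K k (fun i => x ((s.1.orderIsoOfFin s.2 i : Fin n))
        • b ((s.1.orderIsoOfFin s.2 i : Fin n)))
      = (∏ j : Fin k, x ((s.1.orderIsoOfFin s.2 j : Fin n)))
        • ιMulti K k (fun i => b ((s.1.orderIsoOfFin s.2 i : Fin n))) :=
    (ιMulti K k (M := V)).toMultilinearMap.map_smul_univ _ _
  rw [h2]
  have h3 : ∏ i ∈ s.1, x i = ∏ j : Fin k, x ((s.1.orderIsoOfFin s.2 j : Fin n)) := by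
    rw [← Finset.prod_coe_sort s.1 x]
    exact (Equiv.prod_comp (s.1.orderIsoOfFin s.2).toEquiv
      (fun a : {a // a ∈ s.1} => x (a : Fin n))).symm
  rw [show ((((∏ i ∈ s.1, x i) • wB b k s) : ⋀[K]^k V) : ExteriorAlgebra K V)
      = (∏ i ∈ s.1, x i) • (wB b k s : ExteriorAlgebra K V) from rfl, h3]
  rfl

end aux

/-- If `f : V → V` is a diagonalizable endomorphism of an `n`-dimensional vector space
over a field `K`, with an eigenbasis `b` and eigenvalues `x 1, ..., x n` (with
multiplicity), then for each `k` the induced endomorphism `Λ^k f` of the `k`-th exterior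
power is diagonalizable (it admits an eigenbasis indexed by the `k`-element subsets `s`
of `{1,...,n}`, with eigenvalues `∏_{i ∈ s} x i`), and its trace equals
`∑_{1 ≤ i₁ < ... < i_k ≤ n} x i₁ ⬝ ... ⬝ x i_k`, the `k`-th elementary symmetric
polynomial in the eigenvalues. -/
theorem trace_exteriorPower_of_diagonalizable (K : Type*) [Field K]
    (V : Type*) [AddCommGroup V] [Module K V] (n : ℕ)
    (f : V →ₗ[K] V) (x : Fin n → K) (b : Module.Basis (Fin n) K V)
    (hb : ∀ i : Fin n, f (b i) = x i • b i) (k : ℕ) :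
    (∃ c : Module.Basis {s : Finset (Fin n) // s.card = k} K (⋀[K]^k V),
        ∀ s : {s : Finset (Fin n) // s.card = k},
          extPowerMap k f (c s) = (∏ i ∈ s.1, x i) • c s) ∧
      LinearMap.trace K (⋀[K]^k V) (extPowerMap k f) =
        ∑ s ∈ Finset.univ.powersetCard k, ∏ i ∈ s, x i := by
  have hc : ∀ s, extPowerMap k f (cB b k s) = (∏ i ∈ s.1, x i) • cB b k s := by
    intro s
    rw [show cB b k s = wB b k s from by rw [cB, Module.Basis.mk_apply]]
    exact extPowerMap_wB b k f x hb s
  refine ⟨⟨cB b k, hc⟩, ?_⟩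
  haveI : Module.Finite K (⋀[K]^k V) := Module.Finite.of_basis (cB b k)
  rw [LinearMap.trace_eq_matrix_trace K (cB b k)]
  have hm : LinearMap.toMatrix (cB b k) (cB b k) (extPowerMap k f)
      = Matrix.diagonal (fun s : {s : Finset (Fin n) // s.card = k} => ∏ i ∈ s.1, x i) := by
    ext s t
    rw [LinearMap.toMatrix_apply, hc t, map_smul, Module.Basis.repr_self]
    simp only [Finsupp.smul_apply, Finsupp.single_apply, smul_eq_mul, Matrix.diagonal_apply]
    rcases eq_or_ne s t with h | h
    · subst h; simp
    · rw [if_neg (fun hts => h hts.symm), if_neg h, mul_zero]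
  rw [hm, Matrix.trace_diagonal]
  exact (Finset.sum_subtype (Finset.univ.powersetCard k)
    (fun s => by simp [Finset.mem_powersetCard_univ]) (fun s => ∏ i ∈ s, x i)).symm
end

section
/- Let n, k be natural numbers with 0 < k < n and let ξ ∈ ℂ be a primitive n-th root of unity. Then the Gaussian binomial coefficient evaluated at ξ vanishes: binom(n,k)_ξ = 0 in ℂ. -/
open Polynomial Finset

noncomputable def qBracketPoly (n : ℕ) : ℤ[X] :=
  ∑ i ∈ range n, X ^ i

noncomputable def qFactorialPoly (n : ℕ) : ℤ[X] :=
  ∏ i ∈ range n, qBracketPoly (i + 1)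

lemma algebraMap_qFactorialPoly (n : ℕ) :
    algebraMap ℤ[X] (FractionRing ℤ[X]) (qFactorialPoly n) = qFactorial n := by
  simp [qFactorialPoly, qFactorial, qBracketPoly, qBracket, qq]

lemma eval_one_qFactorialPoly (n : ℕ) : (qFactorialPoly n).eval 1 = n.factorial := by
  simp [qFactorialPoly, qBracketPoly, eval_prod, eval_finsetSum, ← prod_range_add_one_eq_factorial]

lemma qFactorialPoly_ne_zero (n : ℕ) : qFactorialPoly n ≠ 0 := fun h => by
  simpa [h, eq_comm, n.factorial_ne_zero] using eval_one_qFactorialPoly n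

lemma mul_qFactorialPoly_of_algebraMap_eq {p : ℤ[X]} {n k : ℕ}
    (hp : algebraMap ℤ[X] (FractionRing ℤ[X]) p =
      qFactorial n / (qFactorial (n - k) * qFactorial k)) :
    p * (qFactorialPoly (n - k) * qFactorialPoly k) = qFactorialPoly n := by
  apply IsFractionRing.injective ℤ[X] (FractionRing ℤ[X])
  have hden : qFactorial (n - k) * qFactorial k ≠ 0 := by
    simp only [← algebraMap_qFactorialPoly, ← map_mul]
    exact (map_ne_zero_iff _ (IsFractionRing.injective _ _)).mpr
      (mul_ne_zero (qFactorialPoly_ne_zero _) (qFactorialPoly_ne_zero _))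
  simp only [map_mul, algebraMap_qFactorialPoly, hp, div_mul_cancel₀ _ hden]

lemma aeval_qBracketPoly {R : Type*} [CommRing R] (x : R) (m : ℕ) :
    aeval x (qBracketPoly m) = ∑ i ∈ range m, x ^ i := by
  simp [qBracketPoly]

namespace IsPrimitiveRoot

variable {R : Type*} [CommRing R] {ξ : R} {n : ℕ}

lemma aeval_qBracketPoly_ne_zero (hξ : IsPrimitiveRoot ξ n) {m : ℕ} (hm0 : 0 < m)
    (hmn : m < n) : aeval ξ (qBracketPoly m) ≠ 0 := by
  intro h
  have hpow : ξ ^ m - 1 = 0 := by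
    rw [← geom_sum_mul, ← aeval_qBracketPoly, h, zero_mul]
  exact hξ.pow_ne_one_of_pos_of_lt hm0.ne' hmn (sub_eq_zero.mp hpow)

variable [IsDomain R]

lemma aeval_qFactorialPoly_ne_zero (hξ : IsPrimitiveRoot ξ n) {m : ℕ} (hmn : m < n) :
    aeval ξ (qFactorialPoly m) ≠ 0 := by
  rw [qFactorialPoly, map_prod, prod_ne_zero_iff]
  intro i hi
  exact hξ.aeval_qBracketPoly_ne_zero i.succ_pos (by rw [mem_range] at hi; omega)

lemma aeval_qFactorialPoly_self (hξ : IsPrimitiveRoot ξ n) (hn : 1 < n) :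
    aeval ξ (qFactorialPoly n) = 0 := by
  obtain ⟨m, rfl⟩ : ∃ m, n = m + 1 := ⟨n - 1, by omega⟩
  rw [qFactorialPoly, prod_range_succ, map_mul, aeval_qBracketPoly, hξ.geom_sum_eq_zero hn,
    mul_zero]

lemma aeval_eq_zero_of_mul_qFactorialPoly_eq (hξ : IsPrimitiveRoot ξ n) {p : ℤ[X]} {k : ℕ}
    (hk0 : 0 < k) (hkn : k < n)
    (hp : p * (qFactorialPoly (n - k) * qFactorialPoly k) = qFactorialPoly n) :
    aeval ξ p = 0 := by
  have hden : aeval ξ (qFactorialPoly (n - k) * qFactorialPoly k) ≠ 0 := by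
    rw [map_mul]
    exact mul_ne_zero (hξ.aeval_qFactorialPoly_ne_zero (by omega))
      (hξ.aeval_qFactorialPoly_ne_zero hkn)
  have h := congrArg (aeval ξ) hp
  rw [map_mul, hξ.aeval_qFactorialPoly_self (by omega)] at h
  exact (mul_eq_zero.mp h).resolve_right hden

end IsPrimitiveRoot

/-- If `0 < k < n` and `ξ ∈ ℂ` is a primitive `n`-th root of unity, then the Gaussian
binomial coefficient evaluated at `ξ` vanishes: `binom(n,k)_ξ = 0` in `ℂ`. -/
theorem qBinom_eval_primitiveRoot_complex (B : ℕ → ℕ → Polynomial ℤ)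
    (hB : ∀ n k : ℕ, k ≤ n →
      algebraMap (Polynomial ℤ) (FractionRing (Polynomial ℤ)) (B n k) =
        qFactorial n / (qFactorial (n - k) * qFactorial k))
    (n k : ℕ) (hk0 : 0 < k) (hkn : k < n)
    (ξ : ℂ) (hξ : IsPrimitiveRoot ξ n) :
    Polynomial.aeval ξ (B n k) = 0 :=
  hξ.aeval_eq_zero_of_mul_qFactorialPoly_eq hk0 hkn
    (mul_qFactorialPoly_of_algebraMap_eq (hB n k hkn.le))
end
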